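/- arXiv:1408.0574 — 5 statements merged into one kernel-verified Lean document; each statement's English description precedes it below -/
import Mathlib

section
/- Let V be a finite type, α a linearly ordered type, and m, m' : V → α value assignments. If m'(v) ≤ m(v) for every v ∈ V and the image of m' is contained in the image of m, then for every natural number i, the number of vertices v with rank r_{m'}(v) < i is at least the number of vertices v with rank r_m(v) < i. (In the paper's notation: each quantity A_i never decreases from one round to the next.) -/
open Finset in
/-- The rank of a vertex `v` under value assignment `m`: the number of distinct
values in the image of `m` that are strictly smaller than `m v`. -/
def rk {V α : Type*} [Fintype V] [LinearOrder α] (m : V → α) (v : V) : ℕ :=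
  ((univ.image m).filter (· < m v)).card

open scoped Classical in
/-- One min-update step: each vertex takes the minimum of `m` over its closed
neighborhood `{v} ∪ {u : G.Adj u v}`. -/
noncomputable def step {V α : Type*} [Fintype V] [LinearOrder α]
    (G : SimpleGraph V) (m : V → α) (v : V) : α :=
  (insert v (Finset.univ.filter (fun u => G.Adj u v))).inf'
    (Finset.insert_nonempty _ _) m

/-- The potential function `Φ_k(m) = Σ_v (k - r_m(v))` (truncated subtraction). -/
def Phi {V α : Type*} [Fintype V] [LinearOrder α] (k : ℕ) (m : V → α) : ℕ :=
  ∑ v, (k - rk m v)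

theorem rk_le_rk_of_image_subset {V α : Type*} [Fintype V] [LinearOrder α]
    {m m' : V → α} {v : V} (hv : m' v ≤ m v)
    (himg : Finset.univ.image m' ⊆ Finset.univ.image m) : rk m' v ≤ rk m v :=
  Finset.card_le_card fun _ ha => by
    rw [Finset.mem_filter] at ha ⊢
    exact ⟨himg ha.1, ha.2.trans_le hv⟩

/-- If `m' ≤ m` pointwise and the image of `m'` is contained in the
image of `m`, then for every `i`, the number of vertices with rank `< i` under
`m'` is at least the number under `m`. -/
theorem rank_count_mono {V α : Type*} [Fintype V] [LinearOrder α]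
    (m m' : V → α)
    (hle : ∀ v, m' v ≤ m v)
    (himg : Finset.univ.image m' ⊆ Finset.univ.image m) :
    ∀ i : ℕ,
      (Finset.univ.filter (fun v => rk m v < i)).card ≤
      (Finset.univ.filter (fun v => rk m' v < i)).card := fun _ =>
  Finset.card_le_card <| Finset.monotone_filter_right _ fun v _ hv =>
    (rk_le_rk_of_image_subset (hle v) himg).trans_lt hv
end

section
/- Let V be a finite type, α a linearly ordered type, p ≥ 1 a natural number, G a simple graph on V with at most p connected components, and m : V → α a value assignment whose image contains at least p + 1 distinct values. Then there exist vertices u and v lying in the same connected component of G such that r_m(u) < r_m(v) and r_m(u) ≤ p − 1. -/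
open Finset

theorem Finset.card_filter_lt_orderEmbOfFin {α : Type*} [LinearOrder α] (s : Finset α) {k : ℕ}
    (h : #s = k) (i : Fin k) : #(s.filter (· < s.orderEmbOfFin h i)) = i := by
  have : s.filter (· < s.orderEmbOfFin h i) = (Iio i).map (s.orderEmbOfFin h).toEmbedding := by
    ext a
    simp only [mem_filter, mem_map, mem_Iio, RelEmbedding.coe_toEmbedding]
    constructor
    · rintro ⟨ha, hlt⟩
      obtain ⟨j, rfl⟩ : a ∈ Set.range (s.orderEmbOfFin h) := by
        rwa [range_orderEmbOfFin]
      exact ⟨j, (s.orderEmbOfFin h).lt_iff_lt.1 hlt, rfl⟩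
    · rintro ⟨j, hj, rfl⟩
      exact ⟨s.orderEmbOfFin_mem h j, (s.orderEmbOfFin h).lt_iff_lt.2 hj⟩
  rw [this, card_map, Fin.card_Iio]

theorem exists_rk_eq {V α : Type*} [Fintype V] [LinearOrder α] (m : V → α) {i : ℕ}
    (hi : i < #(univ.image m)) : ∃ v, rk m v = i := by
  obtain ⟨v, -, hv⟩ := mem_image.1 ((univ.image m).orderEmbOfFin_mem rfl ⟨i, hi⟩)
  exact ⟨v, by rw [rk, hv, card_filter_lt_orderEmbOfFin]⟩

theorem exists_lt_map_eq_of_not_injective {ι β : Type*} [LinearOrder ι] {f : ι → β}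
    (hf : ¬ f.Injective) : ∃ i j, i < j ∧ f i = f j := by
  simp only [Function.Injective, not_forall] at hf
  obtain ⟨i, j, hij, hne⟩ := hf
  rcases lt_or_gt_of_ne hne with h | h
  · exact ⟨i, j, h, hij⟩
  · exact ⟨j, i, h, hij.symm⟩

theorem exists_cross_ranked_pair_general {V α : Type*} [Fintype V] [LinearOrder α]
    (p : ℕ) (G : SimpleGraph V)
    (hG : Nat.card G.ConnectedComponent ≤ p)
    (m : V → α) (hm : p + 1 ≤ (Finset.univ.image m).card) :
    ∃ u v : V, G.Reachable u v ∧ rk m u < rk m v ∧ rk m u ≤ p - 1 := by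
  choose w hw using fun i : Fin (p + 1) => exists_rk_eq m (i.2.trans_le hm)
  have hw_not_inj : ¬ (G.connectedComponentMk ∘ w).Injective := fun hinj => by
    have := Nat.card_le_card_of_injective _ hinj
    rw [Nat.card_fin] at this
    omega
  obtain ⟨i, j, hij, hc⟩ := exists_lt_map_eq_of_not_injective hw_not_inj
  refine ⟨w i, w j, SimpleGraph.ConnectedComponent.exact hc, ?_, ?_⟩
  · simpa [hw] using hij
  · have := j.2
    rw [hw]
    omega

/-- If `G` has at most `p` connected components and `m` takes at
least `p + 1` distinct values, then some connected component contains vertices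
`u, v` with `rk m u < rk m v` and `rk m u ≤ p - 1`. -/
theorem exists_cross_ranked_pair {V α : Type*} [Fintype V] [LinearOrder α]
    (p : ℕ) (hp : 1 ≤ p) (G : SimpleGraph V)
    (hG : Nat.card G.ConnectedComponent ≤ p)
    (m : V → α) (hm : p + 1 ≤ (Finset.univ.image m).card) :
    ∃ u v : V, G.Reachable u v ∧ rk m u < rk m v ∧ rk m u ≤ p - 1 :=
  exists_cross_ranked_pair_general p G hG m hm
end

section
/- Let V be a finite nonempty type, α a linearly ordered type, G a simple graph on V, m : V → α, and k a natural number. If u and v are vertices in the same connected component of G with r_m(u) < r_m(v), then Φ_k(step(G, m)) + min(k, r_m(u)) ≥ Φ_k(m) + min(k, r_m(v)). (A connected component containing vertices of value-classes i < j forces the potential to increase by at least min(k, j) − min(k, i) in one round.) -/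
open Finset

namespace SimpleGraph

variable {V : Type*} {G : SimpleGraph V} (f g : V → ℕ)

theorem Walk.sum_map_support_tail_add_le (hadj : ∀ a b, G.Adj a b → g b ≤ f a)
    {u v : V} (p : G.Walk u v) :
    (p.support.tail.map g).sum + f v ≤ (p.support.tail.map f).sum + f u := by
  induction p with
  | nil => simp
  | @cons a w b h p ih =>
    rw [support_cons, List.tail_cons, ← p.cons_tail_support]
    simp only [List.map_cons, List.sum_cons]
    have := hadj a w h
    omega

theorem Reachable.sum_add_le [Fintype V] (hle : ∀ x, g x ≤ f x)
    (hadj : ∀ a b, G.Adj a b → g b ≤ f a) {u v : V} (h : G.Reachable u v) :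
    ∑ x, g x + f v ≤ ∑ x, f x + f u := by
  classical
  obtain ⟨p⟩ := h
  set q := p.toPath
  have hpath := q.1.sum_map_support_tail_add_le f g hadj
  set S := q.1.support.tail.toFinset
  have hsum (φ : V → ℕ) : ∑ x ∈ S, φ x = (q.1.support.tail.map φ).sum :=
    List.sum_toFinset _ q.2.support_nodup.tail
  have hoff : ∑ x ∈ univ \ S, g x ≤ ∑ x ∈ univ \ S, f x := sum_le_sum fun x _ => hle x
  rw [← sum_sdiff (subset_univ S), ← sum_sdiff (subset_univ S) (f := f), hsum, hsum]
  omega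

end SimpleGraph

section Rank

variable {V α : Type*} [Fintype V] [LinearOrder α]

theorem rk_le_rk_of_image_subset_s3 {m m' : V → α} (himage : univ.image m' ⊆ univ.image m)
    {a b : V} (h : m' b ≤ m a) : rk m' b ≤ rk m a :=
  card_le_card fun _ hx =>
    mem_filter.2 ⟨himage (mem_filter.1 hx).1, (mem_filter.1 hx).2.trans_le h⟩

theorem Phi_add_sum_min_rk (k : ℕ) (m : V → α) :
    Phi k m + ∑ x, min k (rk m x) = Fintype.card V * k := by
  rw [Phi, ← sum_add_distrib]
  simp only [fun x => show k - rk m x + min k (rk m x) = k by omega, sum_const, card_univ,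
    smul_eq_mul]

variable (G : SimpleGraph V) (m : V → α)

theorem step_le_self (b : V) : step G m b ≤ m b := by
  classical
  exact inf'_le _ (mem_insert_self _ _)

theorem step_le_of_adj {a b : V} (h : G.Adj a b) : step G m b ≤ m a := by
  classical
  exact inf'_le _ (mem_insert_of_mem (by simpa using h))

theorem image_step_subset : univ.image (step G m) ⊆ univ.image m := by
  classical
  intro y hy
  obtain ⟨b, -, rfl⟩ := mem_image.1 hy
  obtain ⟨a, -, ha⟩ := exists_mem_eq_inf' (insert_nonempty b (univ.filter (G.Adj · b))) m
  exact mem_image.2 ⟨a, mem_univ a, by rw [step, ha]⟩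

end Rank

theorem phi_step_component_gain_general {V α : Type*} [Fintype V]
    [LinearOrder α] (G : SimpleGraph V) (m : V → α) (k : ℕ) (u v : V)
    (hreach : G.Reachable u v) :
    Phi k (step G m) + min k (rk m u) ≥ Phi k m + min k (rk m v) := by
  have hrk {a b : V} (h : step G m b ≤ m a) : rk (step G m) b ≤ rk m a :=
    rk_le_rk_of_image_subset_s3 (image_step_subset G m) h
  have hsum := hreach.sum_add_le (fun x => min k (rk m x)) (fun x => min k (rk (step G m) x))
    (fun x => min_le_min_left k (hrk (step_le_self G m x)))
    (fun _ _ h => min_le_min_left k (hrk (step_le_of_adj G m h)))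
  have hm := Phi_add_sum_min_rk k m
  have hstep := Phi_add_sum_min_rk k (step G m)
  omega

/-- A connected component containing vertices of distinct rank
classes forces the potential to increase accordingly in one round. -/
theorem phi_step_component_gain {V α : Type*} [Fintype V] [Nonempty V]
    [LinearOrder α] (G : SimpleGraph V) (m : V → α) (k : ℕ) (u v : V)
    (hreach : G.Reachable u v) (hrank : rk m u < rk m v) :
    Phi k (step G m) + min k (rk m u) ≥ Phi k m + min k (rk m v) :=
  phi_step_component_gain_general G m k u v hreach
end

section
/- Let V be a finite type, α a linearly ordered type, k a natural number, and m : V → α a value assignment whose image contains at least k distinct values. Then Φ_k(m) ≥ k(k + 1)/2. -/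
/-! The ranks of the `n ≥ k` distinct values of `m` are exactly `0, 1, …, n - 1`, and `Phi k m`
counts every value at least once, so `Phi k m ≥ ∑_{j < k} (k - j) = k(k+1)/2`. -/

open Finset

theorem Finset.sum_card_filter_lt {α M : Type*} [LinearOrder α] [AddCommMonoid M]
    (S : Finset α) (f : ℕ → M) :
    ∑ a ∈ S, f #{b ∈ S | b < a} = ∑ j ∈ range #S, f j := by
  induction S using induction_on_max with
  | empty => simp
  | insert a s ha ih =>
    have ha_notMem : a ∉ s := fun h => lt_irrefl a (ha a h)
    have hrank_a : #{b ∈ insert a s | b < a} = #s := by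
      rw [filter_insert, if_neg (lt_irrefl a), filter_true_of_mem ha]
    have hrank_x : ∀ x ∈ s, #{b ∈ insert a s | b < x} = #{b ∈ s | b < x} := fun x hx => by
      rw [filter_insert, if_neg (ha x hx).not_gt]
    rw [sum_insert ha_notMem, card_insert_of_notMem ha_notMem,
      sum_range_succ, hrank_a, sum_congr rfl fun x hx => congrArg f (hrank_x x hx),
      ih, add_comm]

theorem Finset.sum_range_sub_self (k : ℕ) : ∑ j ∈ range k, (k - j) = k * (k + 1) / 2 := by
  have hreflect : ∑ j ∈ range k, (k - j) = ∑ j ∈ range k, (j + 1) := by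
    rw [← sum_range_reflect]
    exact sum_congr rfl fun j hj => by have := mem_range.1 hj; omega
  rw [hreflect, ← Nat.add_zero (∑ j ∈ range k, (j + 1)), ← sum_range_succ' (fun j => j),
    sum_range_id, Nat.add_sub_cancel, Nat.mul_comm]

/-- If the image of `m` has at least `k` distinct values, then
`Φ_k(m) ≥ k(k+1)/2`. -/
theorem phi_lower_bound {V α : Type*} [Fintype V] [LinearOrder α]
    (k : ℕ) (m : V → α) (hm : k ≤ (Finset.univ.image m).card) :
    Phi k m ≥ k * (k + 1) / 2 := by
  set S := univ.image m
  calc k * (k + 1) / 2 = ∑ j ∈ range k, (k - j) := (sum_range_sub_self k).symm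
    _ ≤ ∑ j ∈ range #S, (k - j) := sum_le_sum_of_subset (range_subset_range.2 hm)
    _ = ∑ a ∈ S, (k - #{b ∈ S | b < a}) := (S.sum_card_filter_lt (k - ·)).symm
    -- each value of `m` is counted once on the left, and at least once in `Phi`
    _ ≤ Phi k m := sum_image_le_of_nonneg fun _ _ => Nat.zero_le _
end

section
/- Let V be a finite type with |V| = n, α a linearly ordered type, k a natural number, and m : V → α a value assignment whose image contains at least k + 1 distinct values. Then Φ_k(m) ≤ k(n − k) + k(k − 1)/2. -/
namespace Finset

theorem sum_Icc_one_sub (k : ℕ) : ∑ j ∈ Icc 1 k, (k - j) = k * (k - 1) / 2 := by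
  have reflect := sum_Ico_reflect id 1 (le_refl (k + 1))
  simp only [id, Nat.add_sub_cancel, Nat.sub_self] at reflect
  rw [← sum_range_id, range_eq_Ico, ← reflect]
  rfl

theorem sum_sub_le_of_Icc_subset_image {ι : Type*} [DecidableEq ι] {s : Finset ι}
    {f : ι → ℕ} {k : ℕ} (h : Icc 1 k ⊆ s.image f) :
    ∑ i ∈ s, (k - f i) ≤ k * (#s - k) + k * (k - 1) / 2 := by
  obtain ⟨t, hts, hinj, hteq⟩ :=
    exists_subset_injOn_image_eq_of_surjOn (f := f) s (Icc 1 k) fun _ hj => by simpa using h hj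
  replace hts : t ⊆ s := by exact_mod_cast hts
  have hcard : #t = k := by
    rw [← card_image_of_injOn hinj, hteq, Nat.card_Icc, Nat.add_sub_cancel]
  have outside : ∑ i ∈ s \ t, (k - f i) ≤ k * (#s - k) := calc
    ∑ i ∈ s \ t, (k - f i) ≤ ∑ _i ∈ s \ t, k := sum_le_sum fun _ _ => Nat.sub_le _ _
    _ = k * (#s - k) := by
      rw [sum_const, card_sdiff_of_subset hts, hcard, smul_eq_mul, mul_comm]
  have inside : ∑ i ∈ t, (k - f i) = k * (k - 1) / 2 := by
    rw [← sum_Icc_one_sub, ← hteq, sum_image hinj]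
  rw [← sum_sdiff hts, inside]
  exact Nat.add_le_add_right outside _

variable {α : Type*} [LinearOrder α]

theorem strictMonoOn_card_filter_lt (s : Finset α) :
    StrictMonoOn (fun a => #(s.filter (· < a))) s := by
  intro a ha b _ hab
  refine card_lt_card ⟨monotone_filter_right s fun x _ hx => hx.trans hab, fun h => ?_⟩
  simpa using h (mem_filter.2 ⟨ha, hab⟩)

theorem image_card_filter_lt (s : Finset α) :
    s.image (fun a => #(s.filter (· < a))) = range #s := by
  refine eq_of_subset_of_card_le (fun _ hj => ?_) ?_
  · obtain ⟨a, ha, rfl⟩ := mem_image.1 hj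
    exact mem_range.2 (card_lt_card (filter_ssubset.2 ⟨a, ha, lt_irrefl a⟩))
  · rw [card_range, card_image_of_injOn (strictMonoOn_card_filter_lt s).injOn]

end Finset

open Finset in
theorem image_univ_rk {V α : Type*} [Fintype V] [LinearOrder α] (m : V → α) :
    univ.image (rk m) = range #(univ.image m) := by
  rw [← image_card_filter_lt, image_image]
  rfl

/-- If `|V| = n` and the image of `m` has at least `k + 1` distinct
values, then `Φ_k(m) ≤ k(n - k) + k(k - 1)/2`. -/
theorem phi_upper_bound {V α : Type*} [Fintype V] [LinearOrder α]
    (n k : ℕ) (hn : Fintype.card V = n)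
    (m : V → α) (hm : k + 1 ≤ (Finset.univ.image m).card) :
    Phi k m ≤ k * (n - k) + k * (k - 1) / 2 := by
  classical
  have ranks : Finset.Icc 1 k ⊆ Finset.univ.image (rk m) := by
    intro j hj
    rw [image_univ_rk, Finset.mem_range]
    exact (Finset.mem_Icc.1 hj).2.trans_lt hm
  simpa [Phi, ← hn] using Finset.sum_sub_le_of_Icc_subset_image ranks
end
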